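/- arXiv:2312.08504 — 4 statements merged into one kernel-verified Lean document; each statement's English description precedes it below -/
import Mathlib

section
/- Let M be a finite set of goods and let there be n ≥ 1 agents, where each agent i has a monotone submodular valuation v_i : 2^M → ℝ≥0 and an entitlement b_i > 0 with ∑_{i=1}^n b_i = 1. Then there exists an allocation, i.e., pairwise disjoint sets A_1, …, A_n ⊆ M, such that for every agent i, v_i(A_i) ≥ (1/3)·APS(v_i, b_i). -/
set_option linter.unusedSectionVars false

open Finset

noncomputable def APS {G : Type*} [Fintype G] [DecidableEq G]
    (v : Finset G → ℝ) (b : ℝ) : ℝ :=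
  sInf { x : ℝ | ∃ p : G → ℝ, (∀ j, 0 ≤ p j) ∧ (∑ j, p j) = 1 ∧
    x = sSup { y : ℝ | ∃ S : Finset G, (∑ j ∈ S, p j) ≤ b ∧ y = v S } }

section Aux

variable {G : Type*} [Fintype G] [DecidableEq G]

lemma marg_sum (f : Finset G → ℝ)
    (hsub : ∀ (S T : Finset G) (j : G), S ⊆ T → f (T ∪ {j}) - f T ≤ f (S ∪ {j}) - f S)
    (A : Finset G) (C : Finset G) :
    f (A ∪ C) ≤ f A + ∑ j ∈ C, (f (A ∪ {j}) - f A) := by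
  induction C using Finset.induction_on with
  | empty => simp
  | @insert a C ha ih =>
    have h1 : A ∪ insert a C = (A ∪ C) ∪ {a} := by
      ext x
      simp only [Finset.mem_union, Finset.mem_insert, Finset.mem_singleton]
      tauto
    have h2 := hsub A (A ∪ C) a Finset.subset_union_left
    rw [h1, Finset.sum_insert ha]
    linarith

lemma zero_marg (f : Finset G → ℝ)
    (hsub : ∀ (S T : Finset G) (j : G), S ⊆ T → f (T ∪ {j}) - f T ≤ f (S ∪ {j}) - f S)
    (A C : Finset G) (h : ∀ j ∈ C, f (A ∪ {j}) ≤ f A) : f (A ∪ C) ≤ f A := by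
  have h1 := marg_sum f hsub A C
  have h2 : ∑ j ∈ C, (f (A ∪ {j}) - f A) ≤ 0 :=
    Finset.sum_nonpos (fun j hj => by linarith [h j hj])
  linarith

lemma aps_bddBelow (v : Finset G → ℝ) (b : ℝ) (hb : 0 ≤ b) (hv0 : v ∅ = 0) :
    ∀ x ∈ { x : ℝ | ∃ p : G → ℝ, (∀ j, 0 ≤ p j) ∧ (∑ j, p j) = 1 ∧
      x = sSup { y : ℝ | ∃ S : Finset G, (∑ j ∈ S, p j) ≤ b ∧ y = v S } }, 0 ≤ x := by
  rintro x ⟨p, hp, hps, rfl⟩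
  have hmem : (0:ℝ) ∈ { y : ℝ | ∃ S : Finset G, (∑ j ∈ S, p j) ≤ b ∧ y = v S } :=
    ⟨∅, by simpa using hb, hv0.symm⟩
  have hbdd : BddAbove { y : ℝ | ∃ S : Finset G, (∑ j ∈ S, p j) ≤ b ∧ y = v S } := by
    apply (Set.finite_range v).bddAbove.mono
    rintro y ⟨S, _, rfl⟩
    exact ⟨S, rfl⟩
  exact le_csSup hbdd hmem

lemma exists_good_bundle {v : Finset G → ℝ} {b x : ℝ} (hb : 0 < b) (hv0 : v ∅ = 0)
    (hx : x < APS v b) (p : G → ℝ) (hp : ∀ j, 0 ≤ p j) (hps : (∑ j, p j) = 1) :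
    ∃ S : Finset G, (∑ j ∈ S, p j) ≤ b ∧ x < v S := by
  set Y := { y : ℝ | ∃ S : Finset G, (∑ j ∈ S, p j) ≤ b ∧ y = v S } with hY
  have hYne : Y.Nonempty := ⟨v ∅, ∅, by simpa using hb.le, rfl⟩
  have hYbdd : BddAbove Y := by
    apply (Set.finite_range v).bddAbove.mono
    rintro y ⟨S, _, rfl⟩
    exact ⟨S, rfl⟩
  have hmem : sSup Y ∈ { x : ℝ | ∃ p : G → ℝ, (∀ j, 0 ≤ p j) ∧ (∑ j, p j) = 1 ∧
      x = sSup { y : ℝ | ∃ S : Finset G, (∑ j ∈ S, p j) ≤ b ∧ y = v S } } :=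
    ⟨p, hp, hps, rfl⟩
  have hle : APS v b ≤ sSup Y :=
    csInf_le ⟨0, aps_bddBelow v b hb.le hv0⟩ hmem
  have hx' : x < sSup Y := lt_of_lt_of_le hx hle
  obtain ⟨y, hyY, hxy⟩ := exists_lt_of_lt_csSup hYne hx'
  obtain ⟨S, hS, rfl⟩ := hyY
  exact ⟨S, hS, hxy⟩

lemma aps_eq_zero_of_isEmpty [IsEmpty G] (v : Finset G → ℝ) (b : ℝ) : APS v b = 0 := by
  have : { x : ℝ | ∃ p : G → ℝ, (∀ j, 0 ≤ p j) ∧ (∑ j, p j) = 1 ∧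
      x = sSup { y : ℝ | ∃ S : Finset G, (∑ j ∈ S, p j) ≤ b ∧ y = v S } } = ∅ := by
    ext x
    simp only [Set.mem_setOf_eq, Set.mem_empty_iff_false, iff_false]
    rintro ⟨p, _, hps, _⟩
    rw [Finset.sum_of_isEmpty] at hps
    exact one_ne_zero hps.symm
  rw [APS, this, Real.sInf_empty]

end Aux

section Core

variable {ι : Type*} [Fintype ι] [DecidableEq ι] {G : Type*} [Fintype G] [DecidableEq G]

def Dset (A : ι → Finset G) : Finset G := Finset.univ.biUnion A

lemma mem_Dset {A : ι → Finset G} {j : G} : j ∈ Dset A ↔ ∃ k, j ∈ A k := by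
  simp [Dset]

noncomputable def marg (w : ι → Finset G → ℝ) (k : ι) (A : ι → Finset G) (j : G) : ℝ :=
  w k (A k ∪ {j}) - w k (A k)

def Act (w : ι → Finset G → ℝ) (R : ι → Prop) (A : ι → Finset G) (k : ι) : Prop :=
  R k ∧ w k (A k) < 1/3

noncomputable def nu (w : ι → Finset G → ℝ) (b : ι → ℝ) (k : ι) (A : ι → Finset G) (j : G) : ℝ :=
  b k * min (marg w k A j) (2/3)

structure AlgInv (w : ι → Finset G → ℝ) (b : ι → ℝ) (R : ι → Prop)
    (A : ι → Finset G) (π : G → ℝ) : Prop where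
  disj : ∀ k l, k ≠ l → Disjoint (A k) (A l)
  nReal : ∀ k, ¬ R k → A k = ∅
  pinn : ∀ j, 0 ≤ π j
  pizero : ∀ j, j ∉ Dset A → π j = 0
  budget : ∀ k, (∑ j ∈ A k, π j) ≤ (3/2) * b k * min (w k (A k)) (2/3)
  lower : ∀ j ∈ Dset A, ∀ k, Act w R A k → (3/2) * nu w b k A j ≤ π j
  small : ∀ k, Act w R A k → A k ≠ ∅ → ∀ j, j ∉ Dset A → marg w k A j < 1/3

variable {w : ι → Finset G → ℝ} {b : ι → ℝ} {R : ι → Prop}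

lemma core_rec
    (hb : ∀ k, 0 < b k)
    (hwe : ∀ k, w k ∅ = 0)
    (hwm : ∀ k, R k → ∀ S T : Finset G, S ⊆ T → w k S ≤ w k T)
    (hws : ∀ k, R k → ∀ (S T : Finset G) (j : G), S ⊆ T →
      w k (T ∪ {j}) - w k T ≤ w k (S ∪ {j}) - w k S) :
    ∀ (N : ℕ) (A : ι → Finset G) (π : G → ℝ), AlgInv w b R A π →
      ((Finset.univ \ Dset A).card ≤ N) →
      ∃ A' π', AlgInv w b R A' π' ∧
        (∀ k, Act w R A' k → ∀ j, j ∉ Dset A' → marg w k A' j ≤ 0) := by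
  intro N
  induction N with
  | zero =>
    intro A π hInv hcard
    refine ⟨A, π, hInv, ?_⟩
    intro k _ j hj
    exfalso
    have hmem : j ∈ Finset.univ \ Dset A := Finset.mem_sdiff.mpr ⟨Finset.mem_univ _, hj⟩
    rw [Finset.card_eq_zero.mp (Nat.le_zero.mp hcard)] at hmem
    exact absurd hmem (Finset.notMem_empty j)
  | succ N ih =>
    intro A π hInv hcard
    by_cases hfin : ∀ k, Act w R A k → ∀ j, j ∉ Dset A → marg w k A j ≤ 0
    · exact ⟨A, π, hInv, hfin⟩
    · push_neg at hfin
      obtain ⟨k₁, hk₁Act, j₁, hj₁D, hj₁m⟩ := hfin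
      classical
      set P : Finset (ι × G) := Finset.univ.filter
        (fun q => Act w R A q.1 ∧ q.2 ∉ Dset A ∧ 0 < marg w q.1 A q.2) with hPdef
      have hPne : P.Nonempty := by
        refine ⟨(k₁, j₁), ?_⟩
        rw [hPdef, Finset.mem_filter]
        exact ⟨Finset.mem_univ _, hk₁Act, hj₁D, hj₁m⟩
      obtain ⟨q, hqP, hqmax⟩ := P.exists_max_image (fun q => nu w b q.1 A q.2) hPne
      obtain ⟨k₀, j₀⟩ := q
      rw [hPdef, Finset.mem_filter] at hqP
      obtain ⟨-, hAct₀, hj₀D, hm₀pos⟩ := hqP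
      have hqmax' : ∀ k j, Act w R A k → j ∉ Dset A → 0 < marg w k A j →
          nu w b k A j ≤ nu w b k₀ A j₀ := by
        intro k j h1 h2 h3
        exact hqmax (k, j) (by rw [hPdef, Finset.mem_filter]; exact ⟨Finset.mem_univ _, h1, h2, h3⟩)
      have hR₀ : R k₀ := hAct₀.1
      have hj₀A : ∀ k, j₀ ∉ A k := fun k hk => hj₀D (mem_Dset.mpr ⟨k, hk⟩)
      set A' : ι → Finset G := Function.update A k₀ (A k₀ ∪ {j₀}) with hA'def
      set π' : G → ℝ := fun j => if j = j₀ then (3/2) * nu w b k₀ A j₀ else π j with hπ'def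
      have hA'k₀ : A' k₀ = A k₀ ∪ {j₀} := Function.update_self _ _ _
      have hA'k : ∀ k, k ≠ k₀ → A' k = A k := fun k hk => Function.update_of_ne hk _ _
      have hsub₀ : A k₀ ⊆ A' k₀ := by rw [hA'k₀]; exact Finset.subset_union_left
      have hD' : Dset A' = insert j₀ (Dset A) := by
        ext j
        simp only [mem_Dset, Finset.mem_insert]
        constructor
        · rintro ⟨k, hk⟩
          by_cases h : k₀ = k
          · subst h
            rw [hA'k₀, Finset.mem_union, Finset.mem_singleton] at hk
            rcases hk with hk | hk
            · exact Or.inr ⟨k₀, hk⟩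
            · exact Or.inl hk
          · rw [hA'k k (Ne.symm h)] at hk
            exact Or.inr ⟨k, hk⟩
        · rintro (rfl | ⟨k, hk⟩)
          · exact ⟨k₀, by rw [hA'k₀]; exact Finset.mem_union_right _ (Finset.mem_singleton_self _)⟩
          · refine ⟨k, ?_⟩
            by_cases h : k₀ = k
            · subst h; exact hsub₀ hk
            · rw [hA'k k (Ne.symm h)]; exact hk
      have hπ'j₀ : π' j₀ = (3/2) * nu w b k₀ A j₀ := by rw [hπ'def]; simp
      have hπ'j : ∀ j, j ≠ j₀ → π' j = π j := by
        intro j hj; rw [hπ'def]; simp [hj]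
      have hnu₀nn : 0 ≤ nu w b k₀ A j₀ := by
        rw [nu]
        have : (0:ℝ) ≤ min (marg w k₀ A j₀) (2/3) := le_min hm₀pos.le (by norm_num)
        exact mul_nonneg (hb k₀).le this
      -- monotonicity of activity and marginals
      have hwA'le : ∀ k, Act w R A' k → Act w R A k := by
        intro k ⟨hRk, hwk⟩
        refine ⟨hRk, ?_⟩
        by_cases h : k₀ = k
        · subst h
          exact lt_of_le_of_lt (hwm k₀ hR₀ _ _ hsub₀) hwk
        · rw [hA'k k (Ne.symm h)] at hwk; exact hwk
      have hmarg' : ∀ k, R k → ∀ j, marg w k A' j ≤ marg w k A j := by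
        intro k hRk j
        by_cases h : k₀ = k
        · subst h
          have := hws k₀ hRk (A k₀) (A' k₀) j hsub₀
          rw [marg, marg]
          exact this
        · rw [marg, marg, hA'k k (Ne.symm h)]
      have hmargeq : ∀ k, k ≠ k₀ → ∀ j, marg w k A' j = marg w k A j := by
        intro k hk j; rw [marg, marg, hA'k k hk]
      have hnu' : ∀ k, R k → ∀ j, nu w b k A' j ≤ nu w b k A j := by
        intro k hRk j
        rw [nu, nu]
        exact mul_le_mul_of_nonneg_left (min_le_min (hmarg' k hRk j) le_rfl) (hb k).le
      have hInv' : AlgInv w b R A' π' := by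
        refine ⟨?_, ?_, ?_, ?_, ?_, ?_, ?_⟩
        · -- disj
          intro k l hkl
          by_cases hk : k₀ = k
          · subst hk
            rw [hA'k₀, hA'k l (Ne.symm hkl)]
            rw [Finset.disjoint_union_left]
            exact ⟨hInv.disj _ _ hkl, Finset.disjoint_singleton_left.mpr (hj₀A l)⟩
          · by_cases hl : l = k₀
            · subst hl
              rw [hA'k₀, hA'k k (Ne.symm hk)]
              rw [Finset.disjoint_union_right]
              exact ⟨hInv.disj _ _ hkl, Finset.disjoint_singleton_right.mpr (hj₀A k)⟩
            · rw [hA'k k (Ne.symm hk), hA'k l hl]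
              exact hInv.disj _ _ hkl
        · -- nReal
          intro k hk
          have hkk₀ : k ≠ k₀ := fun h => hk (h ▸ hR₀)
          rw [hA'k k hkk₀]
          exact hInv.nReal k hk
        · -- pinn
          intro j
          by_cases h : j = j₀
          · subst h; rw [hπ'j₀]; linarith
          · rw [hπ'j j h]; exact hInv.pinn j
        · -- pizero
          intro j hj
          rw [hD'] at hj
          have hne : j ≠ j₀ := fun h => hj (h ▸ Finset.mem_insert_self _ _)
          have hnD : j ∉ Dset A := fun h => hj (Finset.mem_insert_of_mem h)
          rw [hπ'j j hne]
          exact hInv.pizero j hnD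
        · -- budget
          intro k
          by_cases hk : k₀ = k
          · subst hk
            have hins : A' k₀ = insert j₀ (A k₀) := by
              rw [hA'k₀]
              ext y
              simp only [Finset.mem_union, Finset.mem_singleton, Finset.mem_insert]
              tauto
            have hsum : (∑ j ∈ A' k₀, π' j) = (3/2) * nu w b k₀ A j₀ + ∑ j ∈ A k₀, π j := by
              rw [hins, Finset.sum_insert (hj₀A k₀), hπ'j₀]
              congr 1
              refine Finset.sum_congr rfl ?_
              intro j hj
              exact hπ'j j (fun h => hj₀A k₀ (h ▸ hj))
            rw [hsum]
            by_cases hA0 : A k₀ = ∅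
            · have hold : (∑ j ∈ A k₀, π j) = 0 := by rw [hA0, Finset.sum_empty]
              rw [hold, add_zero]
              have hw' : w k₀ (A' k₀) = w k₀ (A k₀) + marg w k₀ A j₀ := by
                rw [marg, hA'k₀]; ring
              rw [hw', nu]
              have hwA0 : w k₀ (A k₀) = 0 := by rw [hA0, hwe]
              rw [hwA0, zero_add]
              exact le_of_eq (by ring)
            · have hsm := hInv.small k₀ hAct₀ hA0 j₀ hj₀D
              have hwlt : w k₀ (A k₀) < 1/3 := hAct₀.2
              have hwnn0 : 0 ≤ w k₀ (A k₀) := by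
                have := hwm k₀ hR₀ ∅ (A k₀) (Finset.empty_subset _)
                rwa [hwe k₀] at this
              have hbud := hInv.budget k₀
              have hw' : w k₀ (A' k₀) = w k₀ (A k₀) + marg w k₀ A j₀ := by
                rw [marg, hA'k₀]; ring
              have hm23 : marg w k₀ A j₀ < 2/3 := by linarith
              have hminm : min (marg w k₀ A j₀) (2/3) = marg w k₀ A j₀ := min_eq_left (by linarith)
              have hminw : min (w k₀ (A k₀)) (2/3) = w k₀ (A k₀) := min_eq_left (by linarith)
              have hminw' : min (w k₀ (A' k₀)) (2/3) = w k₀ (A' k₀) := min_eq_left (by rw [hw']; linarith)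
              rw [nu, hminm, hminw', hw']
              rw [hminw] at hbud
              have hbk := hb k₀
              nlinarith
          · rw [hA'k k (Ne.symm hk)]
            have : (∑ j ∈ A k, π' j) = ∑ j ∈ A k, π j := by
              refine Finset.sum_congr rfl ?_
              intro j hj
              exact hπ'j j (fun h => hj₀A k (h ▸ hj))
            rw [this]
            exact hInv.budget k
        · -- lower
          intro j hjD' k hActk'
          have hActk := hwA'le k hActk'
          have hRk := hActk.1
          rw [hD'] at hjD'
          rcases Finset.mem_insert.mp hjD' with rfl | hjD
          · -- j = j₀ (j₀ has been renamed to j by rcases rfl)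
            rw [hπ'j₀]
            by_cases hk : k₀ = k
            · subst hk
              have hmem : j ∈ A' k₀ := by
                rw [hA'k₀]; exact Finset.mem_union_right _ (Finset.mem_singleton_self _)
              have hzero : marg w k₀ A' j = 0 := by
                rw [marg]
                have huni : A' k₀ ∪ {j} = A' k₀ := Finset.union_eq_left.mpr
                  (Finset.singleton_subset_iff.mpr hmem)
                rw [huni]; ring
              rw [nu, hzero]
              have hmin0 : min (0:ℝ) (2/3) = 0 := min_eq_left (by norm_num)
              rw [hmin0, mul_zero, mul_zero]
              linarith
            · have heq : nu w b k A' j = nu w b k A j := by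
                rw [nu, nu, hmargeq k (Ne.symm hk) j]
              rw [heq]
              by_cases hm : 0 < marg w k A j
              · have := hqmax' k j hActk hj₀D hm
                linarith
              · push_neg at hm
                have hle : nu w b k A j ≤ 0 := by
                  rw [nu]
                  have h1 : min (marg w k A j) (2/3) ≤ marg w k A j := min_le_left _ _
                  nlinarith [hb k]
                linarith
          · -- j ∈ Dset A
            have hjne : j ≠ j₀ := fun h => hj₀D (h ▸ hjD)
            rw [hπ'j j hjne]
            have hold := hInv.lower j hjD k hActk
            have := hnu' k hRk j
            linarith
        · -- small
          intro k hActk' hne' j hjD'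
          rw [hD'] at hjD'
          have hjne : j ≠ j₀ := fun h => hjD' (h ▸ Finset.mem_insert_self _ _)
          have hjD : j ∉ Dset A := fun h => hjD' (Finset.mem_insert_of_mem h)
          have hActk := hwA'le k hActk'
          have hRk := hActk.1
          by_cases hk : k₀ = k
          · subst hk
            by_cases hA0 : A k₀ = ∅
            · -- first pick of k₀
              have hm₀13 : marg w k₀ A j₀ < 1/3 := by
                have hw' : w k₀ (A' k₀) < 1/3 := hActk'.2
                have : w k₀ (A' k₀) = w k₀ (A k₀) + marg w k₀ A j₀ := by rw [marg, hA'k₀]; ring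
                have hwA0 : w k₀ (A k₀) = 0 := by rw [hA0, hwe]
                linarith
              by_cases hmj : 0 < marg w k₀ A j
              · have hcomp := hqmax' k₀ j hAct₀ hjD hmj
                rw [nu, nu] at hcomp
                have hbk := hb k₀
                have hminle : min (marg w k₀ A j) (2/3) ≤ min (marg w k₀ A j₀) (2/3) :=
                  le_of_mul_le_mul_left (by linarith) hbk
                have hmin₀ : min (marg w k₀ A j₀) (2/3) = marg w k₀ A j₀ :=
                  min_eq_left (by linarith)
                rw [hmin₀] at hminle
                have hmj13 : marg w k₀ A j < 1/3 := by
                  rcases le_total (marg w k₀ A j) (2/3) with h | h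
                  · rw [min_eq_left h] at hminle; linarith
                  · rw [min_eq_right h] at hminle; linarith
                exact lt_of_le_of_lt (hmarg' k₀ hR₀ j) hmj13
              · push_neg at hmj
                exact lt_of_le_of_lt (le_trans (hmarg' k₀ hR₀ j) hmj) (by norm_num)
            · exact lt_of_le_of_lt (hmarg' k₀ hR₀ j) (hInv.small k₀ hAct₀ hA0 j hjD)
          · rw [hmargeq k (Ne.symm hk) j]
            have hne : A k ≠ ∅ := by rwa [hA'k k (Ne.symm hk)] at hne'
            exact hInv.small k hActk hne j hjD
      -- cardinality decreases
      have hcard' : (Finset.univ \ Dset A').card ≤ N := by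
        have hj₀mem : j₀ ∈ Finset.univ \ Dset A :=
          Finset.mem_sdiff.mpr ⟨Finset.mem_univ _, hj₀D⟩
        have hj₀nmem : j₀ ∉ Finset.univ \ Dset A' := by
          rw [Finset.mem_sdiff, hD']
          push_neg
          intro _
          exact Finset.mem_insert_self _ _
        have hsubset : Finset.univ \ Dset A' ⊆ Finset.univ \ Dset A := by
          intro y hy
          rw [Finset.mem_sdiff] at hy ⊢
          refine ⟨hy.1, fun hc => hy.2 ?_⟩
          rw [hD']
          exact Finset.mem_insert_of_mem hc
        have hss : Finset.univ \ Dset A' ⊂ Finset.univ \ Dset A :=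
          ⟨hsubset, fun hc => hj₀nmem (hc hj₀mem)⟩
        have := Finset.card_lt_card hss
        omega
      exact ih A' π' hInv' hcard'

lemma core_final [Nonempty G]
    (hb : ∀ k, 0 < b k) (hbsum : (∑ k, b k) ≤ 1)
    (hwe : ∀ k, w k ∅ = 0)
    (hwm : ∀ k, R k → ∀ S T : Finset G, S ⊆ T → w k S ≤ w k T)
    (hws : ∀ k, R k → ∀ (S T : Finset G) (j : G), S ⊆ T →
      w k (T ∪ {j}) - w k T ≤ w k (S ∪ {j}) - w k S)
    (hP : ∀ k, R k → ∀ p : G → ℝ, (∀ j, 0 ≤ p j) → (∑ j, p j) = 1 →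
      ∃ S : Finset G, (∑ j ∈ S, p j) ≤ b k ∧ 1 < w k S) :
    ∃ A : ι → Finset G, (∀ k l, k ≠ l → Disjoint (A k) (A l)) ∧
      (∀ k, R k → 1/3 ≤ w k (A k)) := by
  classical
  have hinit : AlgInv w b R (fun _ => (∅ : Finset G)) (fun _ => (0:ℝ)) := by
    refine ⟨?_, ?_, ?_, ?_, ?_, ?_, ?_⟩
    · intro k l _; exact Finset.disjoint_empty_left _
    · intro k _; rfl
    · intro j; exact le_refl 0
    · intro j _; rfl
    · intro k
      rw [Finset.sum_empty, hwe k]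
      have : min (0:ℝ) (2/3) = 0 := min_eq_left (by norm_num)
      rw [this, mul_zero]
    · intro j hj
      exfalso
      rw [mem_Dset] at hj
      obtain ⟨k, hk⟩ := hj
      exact absurd hk (Finset.notMem_empty j)
    · intro k _ hne; exact absurd rfl hne
  obtain ⟨A, π, hInv, hfin⟩ := core_rec hb hwe hwm hws
    ((Finset.univ \ Dset (fun _ : ι => (∅ : Finset G))).card)
    (fun _ => ∅) (fun _ => 0) hinit le_rfl
  refine ⟨A, hInv.disj, ?_⟩
  intro i hRi
  by_contra hlt
  push_neg at hlt
  have hAct : Act w R A i := ⟨hRi, hlt⟩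
  have hwnn : ∀ S : Finset G, 0 ≤ w i S := by
    intro S
    have := hwm i hRi ∅ S (Finset.empty_subset S)
    rwa [hwe i] at this
  -- total price bound
  have hterm : ∀ k, (∑ j ∈ A k, π j) ≤ b k := by
    intro k
    refine le_trans (hInv.budget k) ?_
    have h1 : min (w k (A k)) (2/3) ≤ 2/3 := min_le_right _ _
    nlinarith [hb k]
  have htermi : (∑ j ∈ A i, π j) ≤ b i / 2 := by
    refine le_trans (hInv.budget i) ?_
    have h1 : min (w i (A i)) (2/3) ≤ w i (A i) := min_le_left _ _
    nlinarith [hb i, hlt]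
  have hTD : (∑ j, π j) = ∑ j ∈ Dset A, π j := by
    refine (Finset.sum_subset (Finset.subset_univ _) ?_).symm
    intro j _ hj
    exact hInv.pizero j hj
  have hDsum : (∑ j ∈ Dset A, π j) = ∑ k, ∑ j ∈ A k, π j := by
    refine Finset.sum_biUnion ?_
    intro k _ l _ hkl
    exact hInv.disj k l hkl
  have hT : (∑ j, π j) ≤ 1 - b i / 2 := by
    rw [hTD, hDsum]
    have h1 : (∑ k, ∑ j ∈ A k, π j)
        = (∑ j ∈ A i, π j) + ∑ k ∈ Finset.univ.erase i, ∑ j ∈ A k, π j :=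
      (Finset.add_sum_erase _ _ (Finset.mem_univ i)).symm
    have h2 : (∑ k, b k) = b i + ∑ k ∈ Finset.univ.erase i, b k :=
      (Finset.add_sum_erase _ _ (Finset.mem_univ i)).symm
    have h3 : (∑ k ∈ Finset.univ.erase i, ∑ j ∈ A k, π j) ≤ ∑ k ∈ Finset.univ.erase i, b k :=
      Finset.sum_le_sum (fun k _ => hterm k)
    have hb2 : b i + (∑ k ∈ Finset.univ.erase i, b k) ≤ 1 := by rw [← h2]; exact hbsum
    rw [h1]
    linarith
  set L : ℝ := 1 - (∑ j, π j) with hLdef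
  have hL : 0 < L := by
    have := hb i
    rw [hLdef]; linarith
  set H : Finset G := (Dset A \ A i).filter (fun j => 2/3 < marg w i A j) with hH
  have hπH : ∀ j ∈ H, b i ≤ π j := by
    intro j hj
    rw [hH, Finset.mem_filter, Finset.mem_sdiff] at hj
    obtain ⟨⟨hjD, _⟩, hjm⟩ := hj
    have := hInv.lower j hjD i hAct
    rw [nu, min_eq_right (le_of_lt hjm)] at this
    linarith
  set Rs : Finset G := if H.Nonempty then H else {Classical.arbitrary G} with hRs
  have hRsne : Rs.Nonempty := by
    rw [hRs]
    split
    · assumption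
    · exact Finset.singleton_nonempty _
  have hRscard : (0:ℝ) < (Rs.card : ℝ) := by
    have := Finset.card_pos.mpr hRsne
    exact_mod_cast this
  set p : G → ℝ := fun j => π j + (if j ∈ Rs then L / Rs.card else 0) with hp
  have hppos : ∀ j, 0 ≤ p j := by
    intro j
    rw [hp]
    have h1 := hInv.pinn j
    have h2 : (0:ℝ) ≤ (if j ∈ Rs then L / Rs.card else 0) := by
      split
      · positivity
      · exact le_refl 0
    dsimp only
    linarith
  have hpsum : (∑ j, p j) = 1 := by
    rw [hp]
    rw [Finset.sum_add_distrib]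
    have h1 : (∑ j, (if j ∈ Rs then L / Rs.card else 0)) = L := by
      rw [Finset.sum_ite_mem, Finset.univ_inter, Finset.sum_const, nsmul_eq_mul]
      field_simp
    rw [h1, hLdef]
    ring
  obtain ⟨S, hSp, hSw⟩ := hP i hRi p hppos hpsum
  have hπlep : ∀ j, π j ≤ p j := by
    intro j
    rw [hp]
    have : (0:ℝ) ≤ (if j ∈ Rs then L / Rs.card else 0) := by
      split
      · positivity
      · exact le_refl 0
    dsimp only
    linarith
  have hSH : ∀ j ∈ S, j ∉ H := by
    intro j hjS hjH
    have hHne : H.Nonempty := ⟨j, hjH⟩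
    have hRsH : Rs = H := by rw [hRs, if_pos hHne]
    have hpj : b i + L / Rs.card ≤ p j := by
      rw [hp]
      dsimp only
      rw [if_pos (hRsH ▸ hjH)]
      have := hπH j hjH
      linarith
    have hple : p j ≤ ∑ j' ∈ S, p j' :=
      Finset.single_le_sum (fun j' _ => hppos j') hjS
    have hpos : 0 < L / (Rs.card : ℝ) := div_pos hL hRscard
    have hbi : b i < p j := lt_of_lt_of_le (by linarith [hpos] : b i < b i + L / (Rs.card : ℝ)) hpj
    have hbi2 : b i < ∑ j' ∈ S, p j' := lt_of_lt_of_le hbi hple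
    exact absurd hSp (not_le.mpr hbi2)
  set B : Finset G := A i ∪ (S \ Dset A) with hB
  have hwB : w i B ≤ w i (A i) := by
    refine zero_marg (w i) (hws i hRi) (A i) (S \ Dset A) ?_
    intro j hj
    rw [Finset.mem_sdiff] at hj
    have := hfin i hAct j hj.2
    rw [marg] at this
    linarith
  set F : Finset G := S \ B with hF
  have hsubAB : A i ⊆ B := Finset.subset_union_left
  have hchain : w i S ≤ w i B + ∑ j ∈ F, (w i (A i ∪ {j}) - w i (A i)) := by
    have h1 : w i S ≤ w i (B ∪ S) := hwm i hRi S (B ∪ S) Finset.subset_union_right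
    have h2 : B ∪ S = B ∪ F := by rw [hF, Finset.union_sdiff_self_eq_union]
    have h3 := marg_sum (w i) (hws i hRi) B F
    have h4 : (∑ j ∈ F, (w i (B ∪ {j}) - w i B)) ≤ ∑ j ∈ F, (w i (A i ∪ {j}) - w i (A i)) :=
      Finset.sum_le_sum (fun j _ => hws i hRi (A i) B j hsubAB)
    have h5 : w i (B ∪ S) = w i (B ∪ F) := congrArg (w i) h2
    linarith
  have hFfacts : ∀ j ∈ F, (3/2) * (b i * (w i (A i ∪ {j}) - w i (A i))) ≤ π j := by
    intro j hj
    rw [hF, Finset.mem_sdiff] at hj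
    obtain ⟨hjS, hjB⟩ := hj
    rw [hB, Finset.mem_union, Finset.mem_sdiff] at hjB
    push_neg at hjB
    obtain ⟨hjAi, hjD⟩ := hjB
    have hjDset : j ∈ Dset A := hjD hjS
    have hjH := hSH j hjS
    have hmle : marg w i A j ≤ 2/3 := by
      by_contra hgt
      push_neg at hgt
      exact hjH (by
        rw [hH, Finset.mem_filter, Finset.mem_sdiff]
        exact ⟨⟨hjDset, hjAi⟩, hgt⟩)
    have := hInv.lower j hjDset i hAct
    rw [nu, min_eq_left hmle, marg] at this
    exact this
  have hsumF : (∑ j ∈ F, (w i (A i ∪ {j}) - w i (A i))) ≤ 2/3 := by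
    have h1 : (3/2) * b i * (∑ j ∈ F, (w i (A i ∪ {j}) - w i (A i))) ≤ ∑ j ∈ F, π j := by
      calc (3/2) * b i * (∑ j ∈ F, (w i (A i ∪ {j}) - w i (A i)))
          = ∑ j ∈ F, (3/2) * (b i * (w i (A i ∪ {j}) - w i (A i))) := by
            rw [Finset.mul_sum]
            exact Finset.sum_congr rfl (fun j _ => by ring)
        _ ≤ ∑ j ∈ F, π j := Finset.sum_le_sum hFfacts
    have h2 : (∑ j ∈ F, π j) ≤ ∑ j ∈ S, p j := by
      calc (∑ j ∈ F, π j) ≤ ∑ j ∈ F, p j := Finset.sum_le_sum (fun j _ => hπlep j)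
        _ ≤ ∑ j ∈ S, p j := Finset.sum_le_sum_of_subset_of_nonneg
            (by rw [hF]; exact Finset.sdiff_subset) (fun j _ _ => hppos j)
    have h3 : (3/2) * b i * (∑ j ∈ F, (w i (A i ∪ {j}) - w i (A i))) ≤ b i :=
      le_trans h1 (le_trans h2 hSp)
    nlinarith [hb i]
  have : w i S < 1 := by
    have := hchain
    linarith
  linarith

end Core

/-- For `n ≥ 1` agents with monotone submodular nonnegative valuations and positive
entitlements summing to 1, there is an allocation giving every agent at least a third
of her AnyPrice Share. -/
theorem third_APS_allocation_submodular
    {G : Type*} [Fintype G] [DecidableEq G]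
    (n : ℕ) (hn : 1 ≤ n)
    (v : Fin n → Finset G → ℝ)
    (hnn : ∀ i S, 0 ≤ v i S)
    (hempty : ∀ i, v i ∅ = 0)
    (hmono : ∀ i (S T : Finset G), S ⊆ T → v i S ≤ v i T)
    (hsub : ∀ i (S T : Finset G) (j : G), S ⊆ T →
      v i (T ∪ {j}) - v i T ≤ v i (S ∪ {j}) - v i S)
    (b : Fin n → ℝ) (hb : ∀ i, 0 < b i) (hbsum : ∑ i, b i = 1) :
    ∃ A : Fin n → Finset G,
      (∀ i k : Fin n, i ≠ k → Disjoint (A i) (A k)) ∧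
      (∀ i, v i (A i) ≥ (1 / 3) * APS (v i) (b i)) := by
  classical
  set τ : Fin n → ℝ := fun i => APS (v i) (b i) with hτ
  by_cases hR : ∃ i, 0 < τ i
  · -- G is nonempty
    have hGne : Nonempty G := by
      by_contra hG
      have hGe : IsEmpty G := not_nonempty_iff.mp hG
      obtain ⟨i, hi⟩ := hR
      rw [hτ] at hi
      simp only at hi
      rw [aps_eq_zero_of_isEmpty] at hi
      exact lt_irrefl 0 hi
    -- the thresholds
    set Fil : Fin n → Finset (Finset G) :=
      fun i => Finset.univ.powerset.filter (fun S => 3 * v i S < τ i) with hFil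
    have hFilne : ∀ i, 0 < τ i → (Fil i).Nonempty := by
      intro i hi
      refine ⟨∅, ?_⟩
      rw [hFil]
      simp only [Finset.mem_filter, Finset.mem_powerset]
      exact ⟨Finset.empty_subset _, by rw [hempty i]; linarith⟩
    set γ : Fin n → ℝ := fun i =>
      if h : (Fil i).Nonempty then (Fil i).sup' h (v i) else 0 with hγ
    set x : Fin n → ℝ := fun i => (3 * γ i + τ i) / 2 with hx
    have hγnn : ∀ i, 0 < τ i → 0 ≤ γ i := by
      intro i hi
      rw [hγ]; simp only [dif_pos (hFilne i hi)]
      have h0 : (∅ : Finset G) ∈ Fil i := by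
        rw [hFil]
        simp only [Finset.mem_filter, Finset.mem_powerset]
        exact ⟨Finset.empty_subset _, by rw [hempty i]; linarith⟩
      calc (0:ℝ) = v i ∅ := (hempty i).symm
        _ ≤ _ := Finset.le_sup' (v i) h0
    have hγτ : ∀ i, 0 < τ i → 3 * γ i < τ i := by
      intro i hi
      rw [hγ]; simp only [dif_pos (hFilne i hi)]
      rw [show (3:ℝ) * (Fil i).sup' (hFilne i hi) (v i) < τ i ↔
        (Fil i).sup' (hFilne i hi) (v i) < τ i / 3 by constructor <;> intro <;> linarith]
      rw [Finset.sup'_lt_iff]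
      intro S hS
      rw [hFil] at hS
      simp only [Finset.mem_filter] at hS
      linarith [hS.2]
    have hxpos : ∀ i, 0 < τ i → 0 < x i := by
      intro i hi
      have := hγnn i hi
      rw [hx]; dsimp only; linarith
    have hxτ : ∀ i, 0 < τ i → x i < τ i := by
      intro i hi
      have := hγτ i hi
      rw [hx]; dsimp only; linarith
    have hγx : ∀ i, 0 < τ i → 3 * γ i < x i := by
      intro i hi
      have := hγτ i hi
      rw [hx]; dsimp only; linarith
    -- normalized valuations
    set W : Fin n → Finset G → ℝ := fun i S => v i S / x i with hW
    have hcore := core_final (ι := Fin n) (G := G) (w := W) (b := b)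
      (R := fun i => 0 < τ i)
      hb (le_of_eq hbsum)
      (fun k => by rw [hW]; dsimp only; rw [hempty k, zero_div])
      (fun k hk S T hST => by
        rw [hW]; dsimp only
        exact div_le_div_of_nonneg_right (hmono k S T hST) (hxpos k hk).le)
      (fun k hk S T j hST => by
        rw [hW]; dsimp only
        rw [div_sub_div_same, div_sub_div_same]
        exact div_le_div_of_nonneg_right (hsub k S T j hST) (hxpos k hk).le)
      (fun k hk p hp hps => by
        obtain ⟨S, h1, h2⟩ := exists_good_bundle (hb k) (hempty k) (hxτ k hk) p hp hps
        refine ⟨S, h1, ?_⟩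
        rw [hW]; dsimp only
        exact (one_lt_div (hxpos k hk)).mpr h2)
    obtain ⟨A, hdisj, hgood⟩ := hcore
    refine ⟨A, hdisj, ?_⟩
    intro i
    by_cases hi : 0 < τ i
    · have h13 := hgood i hi
      rw [hW] at h13; dsimp only at h13
      have hxi := hxpos i hi
      have hvA : x i / 3 ≤ v i (A i) := by
        rw [le_div_iff₀ hxi] at h13
        nlinarith
      have hnotlt : ¬ (3 * v i (A i) < τ i) := by
        intro hcon
        have hmem : A i ∈ Fil i := by
          rw [hFil]
          simp only [Finset.mem_filter, Finset.mem_powerset]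
          exact ⟨Finset.subset_univ _, hcon⟩
        have hle : v i (A i) ≤ γ i := by
          rw [hγ]
          simp only [dif_pos (hFilne i hi)]
          exact Finset.le_sup' (v i) hmem
        have := hγx i hi
        linarith
      push_neg at hnotlt
      rw [ge_iff_le]
      linarith
    · push_neg at hi
      have h2 : 0 ≤ v i (A i) := hnn i (A i)
      rw [ge_iff_le]
      nlinarith
  · push_neg at hR
    refine ⟨fun _ => ∅, fun i k _ => Finset.disjoint_empty_left _, fun i => ?_⟩
    have h1 : APS (v i) (b i) ≤ 0 := hR i
    have h2 : 0 ≤ v i (∅ : Finset G) := hnn i ∅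
    calc (1/3) * APS (v i) (b i) ≤ 0 := by linarith
      _ ≤ v i ∅ := h2
end

section
/- Let M be a finite set, v : 2^M → ℝ≥0 a valuation, and b ∈ (0,1] an entitlement, and let γ := APS(v, b). Define the capped valuation v' : 2^M → ℝ≥0 by v'(S) := min(γ, v(S)) for all S ⊆ M. Then APS(v', b) = γ. -/
open Finset

private lemma APS_Yfin {G : Type*} [Fintype G] [DecidableEq G]
    (w : Finset G → ℝ) (p : G → ℝ) (b : ℝ) :
    {y : ℝ | ∃ S : Finset G, (∑ j ∈ S, p j) ≤ b ∧ y = w S}.Finite := by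
  apply (Set.finite_range w).subset
  rintro y ⟨S, _, rfl⟩; exact ⟨S, rfl⟩

private lemma APS_Yne {G : Type*} [Fintype G] [DecidableEq G]
    (w : Finset G → ℝ) (p : G → ℝ) {b : ℝ} (hb : 0 ≤ b) :
    {y : ℝ | ∃ S : Finset G, (∑ j ∈ S, p j) ≤ b ∧ y = w S}.Nonempty :=
  ⟨w ∅, ∅, by simpa using hb, rfl⟩

/-- Capping a valuation at its AnyPrice Share value does not change the AnyPrice Share. -/
theorem APS_cap_free {G : Type*} [Fintype G] [DecidableEq G]
    (v : Finset G → ℝ) (hnn : ∀ S, 0 ≤ v S)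
    (b : ℝ) (hb0 : 0 < b) (hb1 : b ≤ 1) :
    APS (fun S => min (APS v b) (v S)) b = APS v b := by
  classical
  set γ := APS v b with hγdef
  set v' : Finset G → ℝ := fun S => min γ (v S) with hv'
  -- the candidate sets
  set Xv := { x : ℝ | ∃ p : G → ℝ, (∀ j, 0 ≤ p j) ∧ (∑ j, p j) = 1 ∧
    x = sSup { y : ℝ | ∃ S : Finset G, (∑ j ∈ S, p j) ≤ b ∧ y = v S } } with hXv
  set Xv' := { x : ℝ | ∃ p : G → ℝ, (∀ j, 0 ≤ p j) ∧ (∑ j, p j) = 1 ∧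
    x = sSup { y : ℝ | ∃ S : Finset G, (∑ j ∈ S, p j) ≤ b ∧ y = v' S } } with hXv'
  have hγeq : γ = sInf Xv := rfl
  have hgoal : APS v' b = sInf Xv' := rfl
  have hXv_nn : ∀ x ∈ Xv, (0:ℝ) ≤ x := by
    rintro x ⟨p, hp, hsum, rfl⟩
    exact le_trans (hnn ∅)
      (le_csSup (APS_Yfin v p b).bddAbove ⟨∅, by simpa using hb0.le, rfl⟩)
  have hγ0 : 0 ≤ γ := by
    rw [hγeq]; exact Real.sInf_nonneg hXv_nn
  have hXv_bdd : BddBelow Xv := ⟨0, hXv_nn⟩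
  have hnn' : ∀ S, 0 ≤ v' S := fun S => le_min hγ0 (hnn S)
  have hXv'_nn : ∀ x ∈ Xv', (0:ℝ) ≤ x := by
    rintro x ⟨p, hp, hsum, rfl⟩
    exact le_trans (hnn' ∅)
      (le_csSup (APS_Yfin v' p b).bddAbove ⟨∅, by simpa using hb0.le, rfl⟩)
  have hXv'_bdd : BddBelow Xv' := ⟨0, hXv'_nn⟩
  -- key pointwise facts for any admissible price vector
  have key : ∀ p : G → ℝ, (∀ j, 0 ≤ p j) → (∑ j, p j) = 1 →
      γ ≤ sSup { y : ℝ | ∃ S : Finset G, (∑ j ∈ S, p j) ≤ b ∧ y = v' S } ∧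
      sSup { y : ℝ | ∃ S : Finset G, (∑ j ∈ S, p j) ≤ b ∧ y = v' S } ≤
        sSup { y : ℝ | ∃ S : Finset G, (∑ j ∈ S, p j) ≤ b ∧ y = v S } := by
    intro p hp hsum
    have hmemXv : sSup { y : ℝ | ∃ S : Finset G, (∑ j ∈ S, p j) ≤ b ∧ y = v S } ∈ Xv :=
      ⟨p, hp, hsum, rfl⟩
    have hγle : γ ≤ sSup { y : ℝ | ∃ S : Finset G, (∑ j ∈ S, p j) ≤ b ∧ y = v S } := by
      rw [hγeq]; exact csInf_le hXv_bdd hmemXv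
    have hsup_mem : sSup { y : ℝ | ∃ S : Finset G, (∑ j ∈ S, p j) ≤ b ∧ y = v S } ∈
        { y : ℝ | ∃ S : Finset G, (∑ j ∈ S, p j) ≤ b ∧ y = v S } :=
      (APS_Yne v p hb0.le).csSup_mem (APS_Yfin v p b)
    obtain ⟨S, hSb, hSv⟩ := hsup_mem
    have hγS : γ ≤ v S := hSv ▸ hγle
    constructor
    · apply le_csSup (APS_Yfin v' p b).bddAbove
      exact ⟨S, hSb, by simp [hv', min_eq_left hγS]⟩
    · apply csSup_le (APS_Yne v' p hb0.le)
      rintro y ⟨T, hTb, rfl⟩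
      exact le_trans (min_le_right _ _)
        (le_csSup (APS_Yfin v p b).bddAbove ⟨T, hTb, rfl⟩)
  by_cases hG : Nonempty G
  · -- nonempty case: both sets are nonempty (uniform prices)
    have hcard : (0:ℝ) < (Fintype.card G : ℝ) := by
      exact_mod_cast Fintype.card_pos_iff.mpr hG
    set p₀ : G → ℝ := fun _ => (Fintype.card G : ℝ)⁻¹ with hp₀
    have hp₀nn : ∀ j, 0 ≤ p₀ j := fun j => inv_nonneg.mpr hcard.le
    have hp₀sum : (∑ j, p₀ j) = 1 := by
      simp [hp₀, Finset.sum_const, nsmul_eq_mul, mul_inv_cancel₀ hcard.ne']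
    have hXv_ne : Xv.Nonempty := ⟨_, p₀, hp₀nn, hp₀sum, rfl⟩
    have hXv'_ne : Xv'.Nonempty := ⟨_, p₀, hp₀nn, hp₀sum, rfl⟩
    rw [hgoal]
    apply le_antisymm
    · apply le_csInf hXv_ne
      rintro x ⟨p, hp, hsum, rfl⟩
      exact le_trans (csInf_le hXv'_bdd ⟨p, hp, hsum, rfl⟩) (key p hp hsum).2
    · apply le_csInf hXv'_ne
      rintro x ⟨p, hp, hsum, rfl⟩
      exact (key p hp hsum).1
  · -- empty case: both sets are empty
    have hempty : ∀ w : Finset G → ℝ,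
        { x : ℝ | ∃ p : G → ℝ, (∀ j, 0 ≤ p j) ∧ (∑ j, p j) = 1 ∧
          x = sSup { y : ℝ | ∃ S : Finset G, (∑ j ∈ S, p j) ≤ b ∧ y = w S } } = ∅ := by
      intro w
      ext x
      simp only [Set.mem_setOf_eq, Set.mem_empty_iff_false, iff_false]
      rintro ⟨p, hp, hsum, _⟩
      have : IsEmpty G := not_nonempty_iff.mp hG
      rw [Finset.univ_eq_empty] at hsum
      simp at hsum
    rw [hgoal, hγeq, hXv', hXv, hempty, hempty]
end

section
/- Let M be a finite set, v : 2^M → ℝ≥0 a valuation with v(∅) = 0 that is monotone (v(S) ≤ v(T) whenever S ⊆ T), b ∈ (0,1], and let z satisfy 0 ≤ z ≤ APS(v, b). Then the symmetric concave-closure value of the truncated valuation v_{↓z} satisfies (v_{↓z})^+(b,…,b) = z. Moreover, for any feasible weight vector (α_S)_{S⊆M} (i.e., α_S ≥ 0, ∑_S α_S = 1, and ∑_{S : j ∈ S} α_S ≤ b for every j ∈ M) whose objective value ∑_S α_S · v_{↓z}(S) equals z, every S with α_S > 0 satisfies v_{↓z}(S) = z. -/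
open Finset

/-- The symmetric concave-closure value `v⁺(b,…,b)`: the maximum over fractional
allocations `α` of subsets (nonnegative weights summing to `1`, using each good with
total weight at most `b`) of the expected value `∑ S, α S * v S`. -/
noncomputable def concaveClosure {G : Type*} [Fintype G] [DecidableEq G]
    (v : Finset G → ℝ) (b : ℝ) : ℝ :=
  sSup { x : ℝ | ∃ α : Finset G → ℝ, (∀ S, 0 ≤ α S) ∧ (∑ S, α S) = 1 ∧
    (∀ j : G, ∑ S ∈ Finset.univ.filter (fun S : Finset G => j ∈ S), α S ≤ b) ∧
    x = ∑ S, α S * v S }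

/-!
Truncation caps every bundle at `z`, so `(v_{↓z})⁺(b,…,b) ≤ z`, and a feasible weight vector
attains `z` exactly when it only weights bundles with `v S ≥ z`. Such a weight vector exists by
von Neumann's minimax theorem applied to the game in which one player picks a bundle of value
`≥ z`, the other a price vector, and the payoff is the price of the bundle: `z ≤ APS(v,b)` says
that every price vector leaves such a bundle of price `≤ b`, so an optimal mixed strategy of the
bundle player loads every good with weight at most `b`.
-/

theorem exists_mem_stdSimplex_forall_sum_mul_le {ι κ : Type*} [Fintype ι] [Fintype κ]
    [Nonempty κ] (A : Matrix ι κ ℝ) (c : ℝ)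
    (h : ∀ p ∈ stdSimplex ℝ κ, ∃ i, ∑ j, A i j * p j ≤ c) :
    ∃ α ∈ stdSimplex ℝ ι, ∀ j, ∑ i, α i * A i j ≤ c := by
  classical
  set B : (ι → ℝ) →ₗ[ℝ] (κ → ℝ) →ₗ[ℝ] ℝ := Matrix.toLinearMap₂' ℝ A
  have hB : ∀ α p, B α p = ∑ i, ∑ j, α i * A i j * p j := by
    intro α p
    simp only [B, Matrix.toLinearMap₂'_apply, smul_eq_mul]
    exact sum_congr rfl fun i _ => sum_congr rfl fun j _ => by ring
  obtain ⟨i₀, -⟩ := h _ (single_mem_stdSimplex ℝ (Classical.arbitrary κ))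
  obtain ⟨α, hα, π, hπ, hsaddle⟩ := Sion.exists_isSaddlePointOn (f := fun α p => B α p)
    ⟨_, single_mem_stdSimplex ℝ i₀⟩ (convex_stdSimplex ℝ ι) (isCompact_stdSimplex ℝ ι)
    (fun p _ =>
      (B.flip p).continuous_of_finiteDimensional.lowerSemicontinuous.lowerSemicontinuousOn _)
    (fun p _ => ((B.flip p).convexOn (convex_stdSimplex ℝ ι)).quasiconvexOn)
    (convex_stdSimplex ℝ κ) ⟨_, single_mem_stdSimplex ℝ (Classical.arbitrary κ)⟩
    (isCompact_stdSimplex ℝ κ)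
    (fun α _ =>
      (B α).continuous_of_finiteDimensional.upperSemicontinuous.upperSemicontinuousOn _)
    (fun α _ => ((B α).concaveOn (convex_stdSimplex ℝ κ)).quasiconcaveOn)
  obtain ⟨i, hi⟩ := h π hπ
  refine ⟨α, hα, fun j => ?_⟩
  -- The saddle inequality at the pure strategies `j` and `i`:
  -- `∑ i', α i' * A i' j ≤ ∑ j', A i j' * π j'`.
  have := hsaddle _ (single_mem_stdSimplex ℝ i) _ (single_mem_stdSimplex ℝ j)
  simpa [hB, Pi.single_apply] using this.trans (by simpa [hB, Pi.single_apply] using hi)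

section Averaging

variable {ι : Type*} [Fintype ι] {α w : ι → ℝ} {z : ℝ}

theorem sum_mul_le_of_forall_le (hα : α ∈ stdSimplex ℝ ι) (hw : ∀ i, w i ≤ z) :
    ∑ i, α i * w i ≤ z :=
  calc ∑ i, α i * w i ≤ ∑ i, α i * z :=
        sum_le_sum fun i _ => mul_le_mul_of_nonneg_left (hw i) (hα.1 i)
    _ = z := by rw [← sum_mul, hα.2, one_mul]

theorem sum_mul_eq_iff_forall_pos (hα : α ∈ stdSimplex ℝ ι) (hw : ∀ i, w i ≤ z) :
    ∑ i, α i * w i = z ↔ ∀ i, 0 < α i → w i = z := by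
  have hsum : ∑ i, α i * w i = z - ∑ i, α i * (z - w i) := by
    simp only [mul_sub, sum_sub_distrib, ← sum_mul, hα.2, one_mul, sub_sub_cancel]
  have hgap : ∀ i ∈ univ, 0 ≤ α i * (z - w i) := fun i _ =>
    mul_nonneg (hα.1 i) (sub_nonneg.2 (hw i))
  rw [hsum, sub_eq_self, sum_eq_zero_iff_of_nonneg hgap]
  refine forall_congr' fun i => ?_
  simp only [mem_univ, true_implies, mul_eq_zero, sub_eq_zero, (hα.1 i).lt_iff_ne',
    eq_comm (a := z)]
  tauto

end Averaging

section APS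

variable {G : Type*} [Fintype G] [DecidableEq G] (v : Finset G → ℝ) {b : ℝ}

-- There are no price vectors, and `sInf ∅ = 0` in `ℝ`.
theorem APS_eq_zero_of_isEmpty [IsEmpty G] : APS v b = 0 := by
  simp [APS]

theorem exists_sum_le_and_APS_le (hb : 0 ≤ b) {p : G → ℝ} (hp : p ∈ stdSimplex ℝ G) :
    ∃ S : Finset G, ∑ j ∈ S, p j ≤ b ∧ APS v b ≤ v S := by
  have affordable_finite (q : G → ℝ) :
      {y | ∃ S : Finset G, ∑ j ∈ S, q j ≤ b ∧ y = v S}.Finite :=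
    (Set.finite_range v).subset fun _ ⟨S, _, hS⟩ => ⟨S, hS.symm⟩
  have empty_affordable (q : G → ℝ) :
      v ∅ ∈ {y | ∃ S : Finset G, ∑ j ∈ S, q j ≤ b ∧ y = v S} := ⟨∅, by simpa using hb, rfl⟩
  obtain ⟨S, hSb, hS⟩ := Set.Nonempty.csSup_mem ⟨_, empty_affordable p⟩ (affordable_finite p)
  refine ⟨S, hSb, hS ▸ csInf_le ⟨v ∅, ?_⟩ ⟨p, hp.1, hp.2, rfl⟩⟩
  rintro _ ⟨q, -, -, rfl⟩
  exact le_csSup (affordable_finite q).bddAbove (empty_affordable q)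

theorem exists_allocation_of_le_APS (hv : 0 ≤ v ∅) (hb : 0 ≤ b) {z : ℝ} (hz : z ≤ APS v b) :
    ∃ α ∈ stdSimplex ℝ (Finset G), (∀ j, ∑ S ∈ univ.filter (fun S => j ∈ S), α S ≤ b) ∧
      ∀ S, 0 < α S → z ≤ v S := by
  cases isEmpty_or_nonempty G
  · refine ⟨Pi.single ∅ 1, single_mem_stdSimplex ℝ _, isEmptyElim, fun S _ => ?_⟩
    rw [S.eq_empty_of_isEmpty]
    linarith [APS_eq_zero_of_isEmpty v (b := b)]
  obtain ⟨α, hα, hload⟩ := exists_mem_stdSimplex_forall_sum_mul_le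
    (fun (S : {S : Finset G // z ≤ v S}) j => if j ∈ S.1 then 1 else 0) b fun p hp => by
      obtain ⟨S, hSb, hS⟩ := exists_sum_le_and_APS_le v hb hp
      exact ⟨⟨S, hz.trans hS⟩, by simpa [boole_mul] using hSb⟩
  obtain ⟨β, β_of_le, β_of_not_le⟩ : ∃ β : Finset G → ℝ,
      (∀ S (h : z ≤ v S), β S = α ⟨S, h⟩) ∧ ∀ S, ¬z ≤ v S → β S = 0 :=
    ⟨fun S => if h : z ≤ v S then α ⟨S, h⟩ else 0, fun _ h => dif_pos h, fun _ h => dif_neg h⟩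
  have sum_mul_β (g : Finset G → ℝ) : ∑ S, β S * g S = ∑ S : {S // z ≤ v S}, α S * g S := by
    rw [← Fintype.sum_subtype_add_sum_subtype (fun S => z ≤ v S),
      Fintype.sum_eq_zero (fun S : {S // ¬z ≤ v S} => β S * g S)
        fun S => by rw [β_of_not_le S S.2, zero_mul], add_zero]
    exact Fintype.sum_congr _ _ fun S => by rw [β_of_le S S.2]
  refine ⟨β, ⟨fun S => ?_, by simpa [hα.2] using sum_mul_β 1⟩, fun j => ?_, fun S hS => ?_⟩
  · by_cases h : z ≤ v S
    · exact (β_of_le S h).symm ▸ hα.1 _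
    · exact (β_of_not_le S h).ge
  · calc ∑ S ∈ univ.filter (fun S => j ∈ S), β S
          = ∑ S, β S * if j ∈ S then 1 else 0 := by rw [sum_filter]; simp only [mul_boole]
      _ = _ := sum_mul_β _
      _ ≤ b := hload j
  · by_contra h
    exact hS.ne' (β_of_not_le S h)

end APS

theorem concaveClosure_eq_of_forall_le {G : Type*} [Fintype G] [DecidableEq G]
    {w : Finset G → ℝ} {b z : ℝ} (hw : ∀ S, w S ≤ z) {α : Finset G → ℝ}
    (hα : α ∈ stdSimplex ℝ (Finset G))
    (hload : ∀ j, ∑ S ∈ univ.filter (fun S => j ∈ S), α S ≤ b) (hαz : ∑ S, α S * w S = z) :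
    concaveClosure w b = z :=
  IsGreatest.csSup_eq ⟨⟨α, hα.1, hα.2, hload, hαz.symm⟩, by
    rintro _ ⟨β, hβ0, hβ1, -, rfl⟩
    exact sum_mul_le_of_forall_le ⟨hβ0, hβ1⟩ hw⟩

theorem concaveClosure_truncation_eq_general {G : Type*} [Fintype G] [DecidableEq G]
    (v : Finset G → ℝ) (hnn : ∀ S, 0 ≤ v S)
    (b : ℝ) (hb0 : 0 < b)
    (z : ℝ) (hz : z ≤ APS v b) :
    concaveClosure (fun S => min (v S) z) b = z ∧
    ∀ α : Finset G → ℝ, (∀ S, 0 ≤ α S) → (∑ S, α S) = 1 →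
      (∀ j : G, ∑ S ∈ Finset.univ.filter (fun S : Finset G => j ∈ S), α S ≤ b) →
      (∑ S, α S * min (v S) z) = z →
      ∀ S : Finset G, 0 < α S → min (v S) z = z := by
  have htrunc : ∀ S, min (v S) z ≤ z := fun S => min_le_right _ _
  obtain ⟨α, hα, hload, hsupp⟩ := exists_allocation_of_le_APS v (hnn ∅) hb0.le hz
  have hαz := (sum_mul_eq_iff_forall_pos hα htrunc).2 fun S hS => min_eq_right (hsupp S hS)
  exact ⟨concaveClosure_eq_of_forall_le htrunc hα hload hαz,
    fun β hβ0 hβ1 _ hβz => (sum_mul_eq_iff_forall_pos ⟨hβ0, hβ1⟩ htrunc).1 hβz⟩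

/-- For `z ≤ APS(v,b)`, the symmetric concave-closure value of the truncation of
`v` at `z` equals `z`; moreover any feasible weight vector achieving objective `z`
puts positive weight only on sets of truncated value exactly `z`. -/
theorem concaveClosure_truncation_eq {G : Type*} [Fintype G] [DecidableEq G]
    (v : Finset G → ℝ) (hnn : ∀ S, 0 ≤ v S) (hempty : v ∅ = 0)
    (hmono : ∀ S T : Finset G, S ⊆ T → v S ≤ v T)
    (b : ℝ) (hb0 : 0 < b) (hb1 : b ≤ 1)
    (z : ℝ) (hz0 : 0 ≤ z) (hz : z ≤ APS v b) :
    concaveClosure (fun S => min (v S) z) b = z ∧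
    ∀ α : Finset G → ℝ, (∀ S, 0 ≤ α S) → (∑ S, α S) = 1 →
      (∀ j : G, ∑ S ∈ Finset.univ.filter (fun S : Finset G => j ∈ S), α S ≤ b) →
      (∑ S, α S * min (v S) z) = z →
      ∀ S : Finset G, 0 < α S → min (v S) z = z :=
  concaveClosure_truncation_eq_general v hnn b hb0 z hz
end

section
/- Let M be a finite set, v : 2^M → ℝ≥0 a monotone submodular valuation, n ≥ 1 an integer, and b ∈ (0,1]. Suppose there exist sets S_1, …, S_h ⊆ M and weights α_1, …, α_h > 0 with ∑_{r=1}^h α_r = 1, with ∑_{r : j ∈ S_r} α_r ≤ b for every j ∈ M, and with v(S_r) ≥ n·b for every r. Let A ⊆ M satisfy v(A) < n·b/3, and for each good j ∈ M \ A let C_j ⊆ A be an arbitrary subset. Then ∑_{j ∈ M \ A} min( 2·n·b/3, v(j | C_j) ) ≥ 2·n/3. -/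
/-!
Averaging over the fractional allocation: for every set `S_r`, submodularity bounds
`v(S_r) - v(A)` by the sum of the marginals `v(j | C_j)` over `j ∈ S_r \ A`, so the capped
marginals over `S_r \ A` sum to at least the cap `2nb/3`. Weighting by `α_r` and exchanging the
sums, each good is counted with total weight at most `b`, hence `b · ∑_j min(…) ≥ 2nb/3`.
-/

open Finset

lemma min_add_le_min_add_min {c x y : ℝ} (hc : 0 ≤ c) (hx : 0 ≤ x) (hy : 0 ≤ y) :
    min c (x + y) ≤ min c x + min c y := by
  rcases le_total c x with hcx | hxc
  · rw [min_eq_left hcx]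
    linarith [min_le_left c (x + y), le_min hc hy]
  rcases le_total c y with hcy | hyc
  · rw [min_eq_left hcy]
    linarith [min_le_left c (x + y), le_min hc hx]
  · rw [min_eq_right hxc, min_eq_right hyc]
    exact min_le_right _ _

lemma min_sum_le_sum_min {ι : Type*} {s : Finset ι} {f : ι → ℝ} {c : ℝ} (hc : 0 ≤ c)
    (hf : ∀ i ∈ s, 0 ≤ f i) : min c (∑ i ∈ s, f i) ≤ ∑ i ∈ s, min c (f i) := by
  classical
  induction s using Finset.induction_on with
  | empty => simp [hc]
  | insert a s ha ih =>
    rw [sum_insert ha, sum_insert ha]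
    have hs := forall_mem_insert .. |>.1 hf
    calc min c (f a + ∑ i ∈ s, f i)
        ≤ min c (f a) + min c (∑ i ∈ s, f i) :=
          min_add_le_min_add_min hc hs.1 (sum_nonneg hs.2)
      _ ≤ min c (f a) + ∑ i ∈ s, min c (f i) := add_le_add_right (ih hs.2) _

section Submodular

variable {G : Type*} [DecidableEq G] {v : Finset G → ℝ}

lemma le_add_sum_marginal (hsub : ∀ (S T : Finset G) (j : G), S ⊆ T →
      v (T ∪ {j}) - v T ≤ v (S ∪ {j}) - v S) (A T : Finset G) :
    v (A ∪ T) ≤ v A + ∑ j ∈ T, (v (A ∪ {j}) - v A) := by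
  induction T using Finset.induction_on with
  | empty => simp
  | insert a T ha ih =>
    have hmarg := hsub A (A ∪ T) a subset_union_left
    rw [sum_insert ha, union_insert, ← union_singleton]
    linarith

lemma le_sum_min_marginal (hmono : ∀ S T : Finset G, S ⊆ T → v S ≤ v T)
    (hsub : ∀ (S T : Finset G) (j : G), S ⊆ T →
      v (T ∪ {j}) - v T ≤ v (S ∪ {j}) - v S)
    {A T : Finset G} {C : G → Finset G} (hC : ∀ j, C j ⊆ A)
    {c : ℝ} (hc : 0 ≤ c) (hcT : c ≤ v T - v A) :
    c ≤ ∑ j ∈ T \ A, min c (v (C j ∪ {j}) - v (C j)) := by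
  have hgain : v T - v A ≤ ∑ j ∈ T \ A, (v (A ∪ {j}) - v A) := by
    have := le_add_sum_marginal hsub A (T \ A)
    rw [union_sdiff_self_eq_union] at this
    linarith [hmono T (A ∪ T) subset_union_right]
  calc c = min c (v T - v A) := (min_eq_left hcT).symm
    _ ≤ min c (∑ j ∈ T \ A, (v (C j ∪ {j}) - v (C j))) :=
        min_le_min_left c <| hgain.trans <| sum_le_sum fun j _ => hsub _ _ j (hC j)
    _ ≤ _ := min_sum_le_sum_min hc fun j _ => sub_nonneg.2 (hmono _ _ subset_union_left)

end Submodular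

lemma sum_mul_sum_inter_le {G ι : Type*} [Fintype ι] [DecidableEq G] {S : ι → Finset G}
    {α : ι → ℝ} {f : G → ℝ} {b : ℝ} {U : Finset G} (hf : ∀ j ∈ U, 0 ≤ f j)
    (hcov : ∀ j : G, ∑ r ∈ univ.filter (fun r => j ∈ S r), α r ≤ b) :
    ∑ r, α r * ∑ j ∈ S r ∩ U, f j ≤ b * ∑ j ∈ U, f j := by
  calc ∑ r, α r * ∑ j ∈ S r ∩ U, f j
      = ∑ j ∈ U, ∑ r ∈ univ.filter (fun r => j ∈ S r), α r * f j := by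
        simp_rw [mul_sum]
        exact sum_comm' fun r j => by simp [and_comm]
    _ = ∑ j ∈ U, (∑ r ∈ univ.filter (fun r => j ∈ S r), α r) * f j := by simp_rw [sum_mul]
    _ ≤ ∑ j ∈ U, b * f j := sum_le_sum fun j hj => mul_le_mul_of_nonneg_right (hcov j) (hf j hj)
    _ = b * ∑ j ∈ U, f j := (mul_sum ..).symm

theorem sum_capped_marginals_lower_bound_general
    {G : Type*} [Fintype G] [DecidableEq G]
    (v : Finset G → ℝ)
    (hmono : ∀ S T : Finset G, S ⊆ T → v S ≤ v T)
    (hsub : ∀ (S T : Finset G) (j : G), S ⊆ T →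
      v (T ∪ {j}) - v T ≤ v (S ∪ {j}) - v S)
    (n : ℕ)
    (b : ℝ) (hb0 : 0 < b)
    (h : ℕ) (S : Fin h → Finset G) (α : Fin h → ℝ)
    (hα : ∀ r, 0 < α r)
    (hαsum : (∑ r, α r) = 1)
    (hcov : ∀ j : G, ∑ r ∈ Finset.univ.filter (fun r : Fin h => j ∈ S r), α r ≤ b)
    (hval : ∀ r, v (S r) ≥ (n : ℝ) * b)
    (A : Finset G) (hA : v A < (n : ℝ) * b / 3)
    (C : G → Finset G) (hC : ∀ j, C j ⊆ A) :
    (∑ j ∈ Aᶜ, min (2 * (n : ℝ) * b / 3) (v (C j ∪ {j}) - v (C j)))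
      ≥ 2 * (n : ℝ) / 3 := by
  set c := 2 * (n : ℝ) * b / 3 with hc_def
  have hc : 0 ≤ c := by positivity
  have hcapped : ∀ r, c ≤ ∑ j ∈ S r ∩ Aᶜ, min c (v (C j ∪ {j}) - v (C j)) := fun r => by
    rw [← sdiff_eq_inter_compl]
    exact le_sum_min_marginal hmono hsub hC hc (by linarith [hval r, hc_def])
  have hweighted : b * (2 * n / 3) ≤ b * ∑ j ∈ Aᶜ, min c (v (C j ∪ {j}) - v (C j)) :=
    calc b * (2 * n / 3) = ∑ r, α r * c := by rw [← sum_mul, hαsum]; ring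
      _ ≤ ∑ r, α r * ∑ j ∈ S r ∩ Aᶜ, min c (v (C j ∪ {j}) - v (C j)) :=
        sum_le_sum fun r _ => mul_le_mul_of_nonneg_left (hcapped r) (hα r).le
      _ ≤ _ := sum_mul_sum_inter_le
        (fun j _ => le_min hc (sub_nonneg.2 (hmono _ _ subset_union_left))) hcov
  exact le_of_mul_le_mul_left hweighted hb0

/-- Lower bound on the sum of capped marginals (the core of Lemma `lem:lower-bound`):
given a fractional allocation supported on sets of value at least `n·b`, and a bundle
`A` of value less than `n·b/3`, the total capped marginal value of the remaining goods
(with respect to arbitrary subsets `C_j ⊆ A`) is at least `2n/3`. -/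
theorem sum_capped_marginals_lower_bound
    {G : Type*} [Fintype G] [DecidableEq G]
    (v : Finset G → ℝ) (hnn : ∀ S, 0 ≤ v S) (hempty : v ∅ = 0)
    (hmono : ∀ S T : Finset G, S ⊆ T → v S ≤ v T)
    (hsub : ∀ (S T : Finset G) (j : G), S ⊆ T →
      v (T ∪ {j}) - v T ≤ v (S ∪ {j}) - v S)
    (n : ℕ) (hn : 1 ≤ n)
    (b : ℝ) (hb0 : 0 < b) (hb1 : b ≤ 1)
    (h : ℕ) (S : Fin h → Finset G) (α : Fin h → ℝ)
    (hα : ∀ r, 0 < α r)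
    (hαsum : (∑ r, α r) = 1)
    (hcov : ∀ j : G, ∑ r ∈ Finset.univ.filter (fun r : Fin h => j ∈ S r), α r ≤ b)
    (hval : ∀ r, v (S r) ≥ (n : ℝ) * b)
    (A : Finset G) (hA : v A < (n : ℝ) * b / 3)
    (C : G → Finset G) (hC : ∀ j, C j ⊆ A) :
    (∑ j ∈ Aᶜ, min (2 * (n : ℝ) * b / 3) (v (C j ∪ {j}) - v (C j)))
      ≥ 2 * (n : ℝ) / 3 :=
  sum_capped_marginals_lower_bound_general v hmono hsub n b hb0 h S α hα hαsum hcov hval A hA C hC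
end
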